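/- Fix r ∈ ℝ^m and let r̃ ∈ ℝ^m, ε > 0 be such that ‖r − r̃‖_∞ ≤ ε. Let (σ,τ) ∈ Ξ and let E^{σ,τ} ⊆ E denote the set of edges used by (σ,τ). Define r^{(1)}, r^{(2)} ∈ ℝ^m by: r^{(1)}_{ij} = r̃_{ij} and r^{(2)}_{ij} = r̃_{ij} for (i,j) ∈ E^{σ,τ}, while r^{(1)}_{ij} = r̃_{ij} − 2nε and r^{(2)}_{ij} = r̃_{ij} + 2nε for (i,j) ∉ E^{σ,τ}. If (σ,τ) is optimal in the mean-payoff games with weights r^{(1)} and with weights r^{(2)}, then (σ,τ) is optimal in the mean-payoff game with weights r. -/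

import Mathlib

open MeasureTheory

/-- Weight of a pair of vertices: the weight of the corresponding edge if it exists, `0`
otherwise. -/
noncomputable def wt {n : ℕ} (E : Finset (Fin n × Fin n))
    (r : {e : Fin n × Fin n // e ∈ E} → ℝ) (p : Fin n × Fin n) : ℝ :=
  if h : p ∈ E then r ⟨p, h⟩ else 0

/-- The set of values `r_{ij} + u_j` over the edges `(i,j)` going out of `i`. -/
def outVals {n : ℕ} (E : Finset (Fin n × Fin n)) (r : {e : Fin n × Fin n // e ∈ E} → ℝ)
    (u : Fin n → ℝ) (i : Fin n) : Set ℝ :=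
  {v | ∃ j : Fin n, (i, j) ∈ E ∧ v = wt E r (i, j) + u j}

/-- `(λ, u)` solves the ergodic equation:
`λ + u i = max_{(i,j) ∈ E} (r_{ij} + u_j)` for `i ∈ VMax` and
`λ + u i = min_{(i,j) ∈ E} (r_{ij} + u_j)` for `i ∉ VMax` (i.e. `i ∈ VMin`). -/
def IsErgodicSol {n : ℕ} (E : Finset (Fin n × Fin n)) (VMax : Finset (Fin n))
    (r : {e : Fin n × Fin n // e ∈ E} → ℝ) (lam : ℝ) (u : Fin n → ℝ) : Prop :=
  ∀ i : Fin n,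
    (i ∈ VMax → IsGreatest (outVals E r u i) (lam + u i)) ∧
    (i ∉ VMax → IsLeast (outVals E r u i) (lam + u i))

/-- A policy of player Max. -/
def IsMaxPolicy {n : ℕ} (E : Finset (Fin n × Fin n)) (VMax : Finset (Fin n))
    (σ : {i : Fin n // i ∈ VMax} → Fin n) : Prop :=
  ∀ i, (i.1, σ i) ∈ E

/-- A policy of player Min. -/
def IsMinPolicy {n : ℕ} (E : Finset (Fin n × Fin n)) (VMax : Finset (Fin n))
    (τ : {i : Fin n // i ∉ VMax} → Fin n) : Prop :=
  ∀ i, (i.1, τ i) ∈ E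

/-- The successor map of the subgraph `G^{σ,τ}` in which every vertex keeps only the edge
chosen by the corresponding policy. -/
def combine {n : ℕ} (VMax : Finset (Fin n)) (σ : {i : Fin n // i ∈ VMax} → Fin n)
    (τ : {i : Fin n // i ∉ VMax} → Fin n) : Fin n → Fin n :=
  fun i => if h : i ∈ VMax then σ ⟨i, h⟩ else τ ⟨i, h⟩

/-- The bias `u` induces the pair of policies `(σ, τ)`: at every vertex, the edge chosen by
the policy achieves the maximum (for Max) or minimum (for Min) of `r_{ij} + u_j`. -/
def Induces {n : ℕ} (E : Finset (Fin n × Fin n)) (VMax : Finset (Fin n))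
    (r : {e : Fin n × Fin n // e ∈ E} → ℝ) (u : Fin n → ℝ)
    (σ : {i : Fin n // i ∈ VMax} → Fin n) (τ : {i : Fin n // i ∉ VMax} → Fin n) : Prop :=
  IsMaxPolicy E VMax σ ∧ IsMinPolicy E VMax τ ∧
  (∀ i : {i : Fin n // i ∈ VMax},
      IsGreatest (outVals E r u i.1) (wt E r (i.1, σ i) + u (σ i))) ∧
  (∀ i : {i : Fin n // i ∉ VMax},
      IsLeast (outVals E r u i.1) (wt E r (i.1, τ i) + u (τ i)))

/-- The mean payoff `g_i` of the play starting at `i` following the successor map `f`. -/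
noncomputable def payoff {n : ℕ} (E : Finset (Fin n × Fin n))
    (r : {e : Fin n × Fin n // e ∈ E} → ℝ) (f : Fin n → Fin n) (i : Fin n) : ℝ :=
  Filter.liminf
    (fun N : ℕ => (N : ℝ)⁻¹ * ∑ t ∈ Finset.range N, wt E r (f^[t] i, f^[t + 1] i))
    Filter.atTop

/-- `x` lies on a directed cycle of the functional graph of `f`. -/
def IsPeriodicVertex {n : ℕ} (f : Fin n → Fin n) (x : Fin n) : Prop :=
  ∃ k : ℕ, 0 < k ∧ f^[k] x = x

/-- The functional graph of `f` has exactly one directed cycle. -/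
def HasUniqueCycle {n : ℕ} (f : Fin n → Fin n) : Prop :=
  ∀ x y : Fin n, IsPeriodicVertex f x → IsPeriodicVertex f y → ∃ k : ℕ, f^[k] x = y

/-- `(σ, τ)` is a bias-induced pair of policies of the MPG with weights `r`. -/
def BiasInduced {n : ℕ} (E : Finset (Fin n × Fin n)) (VMax : Finset (Fin n))
    (r : {e : Fin n × Fin n // e ∈ E} → ℝ)
    (σ : {i : Fin n // i ∈ VMax} → Fin n) (τ : {i : Fin n // i ∉ VMax} → Fin n) : Prop :=
  ∃ lam u, IsErgodicSol E VMax r lam u ∧ Induces E VMax r u σ τ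

/-- `(σ, τ) ∈ Ξ`: a pair of policies whose subgraph `G^{σ,τ}` has exactly one cycle. -/
def InXi {n : ℕ} (E : Finset (Fin n × Fin n)) (VMax : Finset (Fin n))
    (σ : {i : Fin n // i ∈ VMax} → Fin n) (τ : {i : Fin n // i ∉ VMax} → Fin n) : Prop :=
  IsMaxPolicy E VMax σ ∧ IsMinPolicy E VMax τ ∧ HasUniqueCycle (combine VMax σ τ)

/-- `P^{σ,τ}`: the set of weight vectors for which `(σ, τ)` is the unique pair of
bias-induced policies. -/
def Pcell {n : ℕ} (E : Finset (Fin n × Fin n)) (VMax : Finset (Fin n))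
    (σ : {i : Fin n // i ∈ VMax} → Fin n) (τ : {i : Fin n // i ∉ VMax} → Fin n) :
    Set ({e : Fin n × Fin n // e ∈ E} → ℝ) :=
  {r | BiasInduced E VMax r σ τ ∧
    ∀ σ' τ', BiasInduced E VMax r σ' τ' → σ' = σ ∧ τ' = τ}

/-- `U := ∪_{(σ,τ) ∈ Ξ} P^{σ,τ}`. -/
def Ucell {n : ℕ} (E : Finset (Fin n × Fin n)) (VMax : Finset (Fin n)) :
    Set ({e : Fin n × Fin n // e ∈ E} → ℝ) :=
  ⋃ σ, ⋃ τ, ⋃ (_ : InXi E VMax σ τ), Pcell E VMax σ τ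

/-- `(λ, u)` solves the zero-player (fixed policies) equation on the functional graph of
`f`. -/
def IsZeroPlayerSol {n : ℕ} (E : Finset (Fin n × Fin n)) (f : Fin n → Fin n)
    (r : {e : Fin n × Fin n // e ∈ E} → ℝ) (lam : ℝ) (u : Fin n → ℝ) : Prop :=
  ∀ i : Fin n, lam + u i = wt E r (i, f i) + u (f i)

/-- `(λ, u)` is the normalized solution of the zero-player equation: additionally `u`
vanishes at the smallest-index vertex of the cycle. For `(σ,τ) ∈ Ξ`, this characterizes
`(λ^{σ,τ}(r), u^{σ,τ}(r))`. -/
def IsNormalizedSol {n : ℕ} (E : Finset (Fin n × Fin n)) (f : Fin n → Fin n)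
    (r : {e : Fin n × Fin n // e ∈ E} → ℝ) (lam : ℝ) (u : Fin n → ℝ) : Prop :=
  IsZeroPlayerSol E f r lam u ∧
  ∃ k : Fin n, IsPeriodicVertex f k ∧ (∀ l, IsPeriodicVertex f l → k ≤ l) ∧ u k = 0

/-- The graph is ergodic: the ergodic equation is solvable for every choice of weights. -/
def IsErgodicGraph {n : ℕ} (E : Finset (Fin n × Fin n)) (VMax : Finset (Fin n)) : Prop :=
  ∀ r : {e : Fin n × Fin n // e ∈ E} → ℝ, ∃ lam u, IsErgodicSol E VMax r lam u


/-- `(σ,τ)` is a pair of optimal policies of the mean-payoff game with weights `r`. -/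
def OptimalPair {n : ℕ} (E : Finset (Fin n × Fin n)) (VMax : Finset (Fin n))
    (r : {e : Fin n × Fin n // e ∈ E} → ℝ)
    (σ : {i : Fin n // i ∈ VMax} → Fin n) (τ : {i : Fin n // i ∉ VMax} → Fin n) : Prop :=
  IsMaxPolicy E VMax σ ∧ IsMinPolicy E VMax τ ∧
  ∀ σ' τ', IsMaxPolicy E VMax σ' → IsMinPolicy E VMax τ' → ∀ i : Fin n,
    payoff E r (combine VMax σ' τ) i ≤ payoff E r (combine VMax σ τ) i ∧
    payoff E r (combine VMax σ τ) i ≤ payoff E r (combine VMax σ τ') i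

/-- The edge `e` is used by the pair of policies `(σ,τ)`. -/
def UsedEdge {n : ℕ} {E : Finset (Fin n × Fin n)} (VMax : Finset (Fin n))
    (σ : {i : Fin n // i ∈ VMax} → Fin n) (τ : {i : Fin n // i ∉ VMax} → Fin n)
    (e : {e : Fin n × Fin n // e ∈ E}) : Prop :=
  if h : e.1.1 ∈ VMax then σ ⟨e.1.1, h⟩ = e.1.2 else τ ⟨e.1.1, h⟩ = e.1.2

/-!
Under positional policies every play ends in a cycle of length `L ≤ n`, so its mean payoff is
the mean weight of that cycle. Suppose Max deviates to `σ'` and look at the cycle of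
`(σ', τ)` reached from `i`. If all its edges are used by `(σ, τ)`, it is the unique cycle of
`G^{σ,τ}`, and both payoffs agree. Otherwise one of its edges is unused; there `r⁽²⁾` exceeds
`r̃` by `2nε`, so along the cycle the mean of `r⁽²⁾` exceeds that of `r̃` by at least
`2nε / L ≥ 2ε`. Since `r` and `r̃` differ by at most `ε` on every mean, optimality of `(σ, τ)`
for `r⁽²⁾` then carries over to `r`. Deviations of Min are the same argument for `r⁽¹⁾`
applied to the negated weights.
-/

open Filter Topology Finset

section EventuallyPeriodic

variable {N₀ L : ℕ}

theorem sum_Ico_add_eq_of_eventually_periodic {M : Type*} [AddCommGroup M] {a : ℕ → M}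
    (ha : ∀ t, N₀ ≤ t → a (t + L) = a t) {N : ℕ} (hN : N₀ ≤ N) :
    ∑ t ∈ Ico N (N + L), a t = ∑ t ∈ Ico N₀ (N₀ + L), a t := by
  induction N, hN using Nat.le_induction with
  | base => rfl
  | succ N hN ih =>
    have top := sum_Ico_succ_top (show N ≤ N + L by omega) a
    have bot := sum_eq_sum_Ico_succ_bot (show N < N + L + 1 by omega) a
    rw [show N + 1 + L = N + L + 1 by omega, ← ih]
    rw [top, ha N hN] at bot
    exact add_left_cancel (bot.symm.trans (add_comm _ _))

theorem finite_range_of_eventually_periodic {α : Type*} {b : ℕ → α} (hL : 0 < L)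
    (hb : ∀ t, N₀ ≤ t → b (t + L) = b t) : (Set.range b).Finite := by
  have hper : Function.Periodic (fun s => b (N₀ + s)) L := fun s => by
    simpa only [add_assoc] using hb (N₀ + s) (by omega)
  refine ((Set.finite_Iio (N₀ + L)).image b).subset ?_
  rintro _ ⟨N, rfl⟩
  rcases lt_or_ge N N₀ with hN | hN
  · exact ⟨N, by simp only [Set.mem_Iio]; omega, rfl⟩
  · have hmod := Nat.mod_lt (N - N₀) hL
    refine ⟨N₀ + (N - N₀) % L, by simp only [Set.mem_Iio]; omega, ?_⟩
    simpa only [Nat.add_sub_cancel' hN] using hper.map_mod_nat (N - N₀)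

theorem tendsto_cesaro_of_eventually_periodic {a : ℕ → ℝ} (hL : 0 < L)
    (ha : ∀ t, N₀ ≤ t → a (t + L) = a t) :
    Tendsto (fun N : ℕ => (N : ℝ)⁻¹ * ∑ t ∈ range N, a t) atTop
      (𝓝 ((∑ t ∈ Ico N₀ (N₀ + L), a t) / L)) := by
  set C := ∑ t ∈ Ico N₀ (N₀ + L), a t
  -- the partial sums stay within bounded distance of the linear function `N * (C / L)`
  set b : ℕ → ℝ := fun N => ∑ t ∈ range N, a t - N * (C / L) with hb
  have hbper : ∀ N, N₀ ≤ N → b (N + L) = b N := fun N hN => by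
    have hsplit := sum_range_add_sum_Ico a (Nat.le_add_right N L)
    rw [sum_Ico_add_eq_of_eventually_periodic ha hN] at hsplit
    simp only [hb, ← hsplit, Nat.cast_add]
    field_simp
    ring
  have hbdd : IsBoundedUnder (· ≤ ·) atTop ((‖·‖) ∘ b) := by
    refine BddAbove.isBoundedUnder_of_range ?_
    rw [Set.range_comp]
    exact ((finite_range_of_eventually_periodic hL hbper).image _).bddAbove
  have hlim := (tendsto_inv_atTop_nhds_zero_nat (𝕜 := ℝ)).zero_mul_isBoundedUnder_le hbdd
  rw [← zero_add (C / L)]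
  refine (hlim.add_const (C / L)).congr' ?_
  filter_upwards [eventually_ne_atTop 0] with N hN
  simp only [hb]
  field_simp
  ring

end EventuallyPeriodic

section Iterate

variable {α : Type*}

theorem exists_iterate_add_eq [Fintype α] (f : α → α) (x : α) :
    ∃ N₀ L, 0 < L ∧ N₀ + L ≤ Fintype.card α ∧ f^[N₀ + L] x = f^[N₀] x := by
  obtain ⟨a, b, hab, heq⟩ := Fintype.exists_ne_map_eq_of_card_lt
    (fun k : Fin (Fintype.card α + 1) => f^[k] x) (by simp)
  rcases Fin.lt_or_lt_of_ne hab with h | h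
  · refine ⟨a, b - a, by omega, by omega, ?_⟩
    rw [Nat.add_sub_cancel' h.le]
    exact heq.symm
  · refine ⟨b, a - b, by omega, by omega, ?_⟩
    rw [Nat.add_sub_cancel' h.le]
    exact heq

variable {f : α → α} {x : α} {N₀ L : ℕ}

theorem iterate_add_eq_of_le (hper : f^[N₀ + L] x = f^[N₀] x) {t : ℕ} (ht : N₀ ≤ t) :
    f^[t + L] x = f^[t] x := by
  obtain ⟨s, rfl⟩ := Nat.exists_eq_add_of_le ht
  rw [show N₀ + s + L = s + (N₀ + L) by omega, Function.iterate_add_apply, hper,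
    ← Function.iterate_add_apply, add_comm]

theorem iterate_eq_iterate_of_agree_on_orbit {g : α → α} (h : ∀ t, g (g^[t] x) = f (g^[t] x))
    (t : ℕ) : f^[t] x = g^[t] x := by
  induction t with
  | zero => rfl
  | succ t ih => rw [Function.iterate_succ_apply', Function.iterate_succ_apply', ih, h]

end Iterate

section Payoff

variable {n : ℕ} {E : Finset (Fin n × Fin n)}

theorem payoff_eq_sum_Ico_div (r : {e : Fin n × Fin n // e ∈ E} → ℝ) {f : Fin n → Fin n}
    {i : Fin n} {N L : ℕ} (hL : 0 < L) (hper : f^[N + L] i = f^[N] i) :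
    payoff E r f i = (∑ t ∈ Ico N (N + L), wt E r (f^[t] i, f (f^[t] i))) / L := by
  have ha : ∀ t, N ≤ t →
      wt E r (f^[t + L] i, f^[t + L + 1] i) = wt E r (f^[t] i, f^[t + 1] i) := fun t ht => by
    rw [iterate_add_eq_of_le hper ht, add_right_comm, iterate_add_eq_of_le hper (by omega)]
  simp_rw [← Function.iterate_succ_apply' f]
  exact (tendsto_cesaro_of_eventually_periodic
    (a := fun t => wt E r (f^[t] i, f^[t + 1] i)) hL ha).liminf_eq

theorem payoff_iterate (r : {e : Fin n × Fin n // e ∈ E} → ℝ) (f : Fin n → Fin n) (i : Fin n)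
    (k : ℕ) : payoff E r f (f^[k] i) = payoff E r f i := by
  obtain ⟨N, L, hL, -, hper⟩ := exists_iterate_add_eq f i
  have hper' : f^[N + L] (f^[k] i) = f^[N] (f^[k] i) := by
    simp only [← Function.iterate_add_apply]
    rw [add_right_comm, iterate_add_eq_of_le hper (Nat.le_add_right N k)]
  rw [payoff_eq_sum_Ico_div r hL hper',
    payoff_eq_sum_Ico_div r hL (iterate_add_eq_of_le hper (Nat.le_add_right N k))]
  simp only [← Function.iterate_add_apply]
  rw [sum_Ico_add' (fun t => wt E r (f^[t] i, f (f^[t] i))), add_right_comm N L k]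

theorem payoff_eq_of_hasUniqueCycle (r : {e : Fin n × Fin n // e ∈ E} → ℝ) {f : Fin n → Fin n}
    (hf : HasUniqueCycle f) (i j : Fin n) : payoff E r f i = payoff E r f j := by
  have hcycle : ∀ i, ∃ p, IsPeriodicVertex f p ∧ payoff E r f p = payoff E r f i := fun i => by
    obtain ⟨N, L, hL, -, hper⟩ := exists_iterate_add_eq f i
    refine ⟨f^[N] i, ⟨L, hL, ?_⟩, payoff_iterate r f i N⟩
    rw [← Function.iterate_add_apply, add_comm, hper]
  obtain ⟨p, hp, hpi⟩ := hcycle i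
  obtain ⟨q, hq, hqj⟩ := hcycle j
  obtain ⟨k, rfl⟩ := hf p q hp hq
  rw [← hpi, ← hqj, payoff_iterate]

theorem payoff_congr_weights {r r' : {e : Fin n × Fin n // e ∈ E} → ℝ} {f : Fin n → Fin n}
    (h : ∀ z, wt E r (z, f z) = wt E r' (z, f z)) (i : Fin n) :
    payoff E r f i = payoff E r' f i := by
  simp only [payoff, Function.iterate_succ_apply', h]

theorem payoff_congr_orbit (r : {e : Fin n × Fin n // e ∈ E} → ℝ) {f g : Fin n → Fin n} {i : Fin n}
    (h : ∀ t, f^[t] i = g^[t] i) : payoff E r f i = payoff E r g i := by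
  simp only [payoff, h]

theorem wt_neg (r : {e : Fin n × Fin n // e ∈ E} → ℝ) (p : Fin n × Fin n) :
    wt E (-r) p = -wt E r p := by
  unfold wt
  split_ifs <;> simp

theorem payoff_neg (r : {e : Fin n × Fin n // e ∈ E} → ℝ) (f : Fin n → Fin n) (i : Fin n) :
    payoff E (-r) f i = -payoff E r f i := by
  obtain ⟨N, L, hL, -, hper⟩ := exists_iterate_add_eq f i
  rw [payoff_eq_sum_Ico_div _ hL hper, payoff_eq_sum_Ico_div _ hL hper]
  simp only [wt_neg, sum_neg_distrib, neg_div]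

variable {r r' : {e : Fin n × Fin n // e ∈ E} → ℝ} {ε : ℝ}

theorem abs_wt_sub_wt_le (hε : 0 ≤ ε) (h : ∀ e, |r e - r' e| ≤ ε) (p : Fin n × Fin n) :
    |wt E r p - wt E r' p| ≤ ε := by
  unfold wt
  split_ifs
  exacts [h _, by simpa using hε]

theorem abs_payoff_sub_payoff_le (hε : 0 ≤ ε) (h : ∀ e, |r e - r' e| ≤ ε)
    (f : Fin n → Fin n) (i : Fin n) : |payoff E r f i - payoff E r' f i| ≤ ε := by
  obtain ⟨N, L, hL, -, hper⟩ := exists_iterate_add_eq f i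
  have hL' : (0 : ℝ) < L := by exact_mod_cast hL
  rw [payoff_eq_sum_Ico_div _ hL hper, payoff_eq_sum_Ico_div _ hL hper, ← sub_div,
    ← sum_sub_distrib, abs_div, Nat.abs_cast, div_le_iff₀ hL']
  refine (abs_sum_le_sum_abs _ _).trans
    ((sum_le_card_nsmul _ _ _ fun t _ => abs_wt_sub_wt_le hε h _).trans ?_)
  simp [mul_comm]

theorem payoff_add_div_le_of_gap {g : Fin n → Fin n} {i : Fin n} {N L : ℕ} {δ : ℝ}
    (hle : ∀ z, wt E r (z, g z) ≤ wt E r' (z, g z)) (hL : 0 < L)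
    (hper : g^[N + L] i = g^[N] i)
    (hgap : wt E r (g^[N] i, g (g^[N] i)) + δ ≤ wt E r' (g^[N] i, g (g^[N] i))) :
    payoff E r g i + δ / L ≤ payoff E r' g i := by
  have hL' : (0 : ℝ) < L := by exact_mod_cast hL
  rw [payoff_eq_sum_Ico_div r hL hper, payoff_eq_sum_Ico_div r' hL hper, ← add_div,
    div_le_div_iff_of_pos_right hL']
  have hsingle := single_le_sum (f := fun t => wt E r' (g^[t] i, g (g^[t] i)) -
      wt E r (g^[t] i, g (g^[t] i))) (fun t _ => sub_nonneg.2 (hle _))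
    (left_mem_Ico.2 (Nat.lt_add_of_pos_right (n := N) hL))
  rw [sum_sub_distrib] at hsingle
  linarith

end Payoff

theorem payoff_le_payoff_of_perturbed {n : ℕ} {E : Finset (Fin n × Fin n)}
    {r rt w : {e : Fin n × Fin n // e ∈ E} → ℝ} {ε : ℝ} (hε : 0 ≤ ε)
    (hclose : ∀ e, |r e - rt e| ≤ ε) {f g : Fin n → Fin n} (hf : HasUniqueCycle f)
    (hfw : ∀ z, wt E w (z, f z) = wt E rt (z, f z))
    (hgw : ∀ z, g z ≠ f z → wt E rt (z, g z) + 2 * n * ε ≤ wt E w (z, g z))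
    (hopt : ∀ j, payoff E w g j ≤ payoff E w f j) (i : Fin n) :
    payoff E r g i ≤ payoff E r f i := by
  obtain ⟨N, L, hL, hLn, hper⟩ := exists_iterate_add_eq g i
  rw [Fintype.card_fin] at hLn
  by_cases hagree : ∀ t, N ≤ t → g (g^[t] i) = f (g^[t] i)
  · have horbit : ∀ t, f^[t] (g^[N] i) = g^[t] (g^[N] i) :=
      iterate_eq_iterate_of_agree_on_orbit fun t => by
        rw [← Function.iterate_add_apply]
        exact hagree _ (Nat.le_add_left N t)
    calc payoff E r g i = payoff E r g (g^[N] i) := (payoff_iterate r g i N).symm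
      _ = payoff E r f (g^[N] i) := (payoff_congr_orbit r horbit).symm
      _ ≤ payoff E r f i := (payoff_eq_of_hasUniqueCycle r hf _ _).le
  · push Not at hagree
    obtain ⟨t, ht, hne⟩ := hagree
    have hle : ∀ z, wt E rt (z, g z) ≤ wt E w (z, g z) := fun z => by
      by_cases hz : g z = f z
      · rw [hz, hfw]
      · linarith [hgw z hz, show 0 ≤ 2 * n * ε by positivity]
    have hgain : payoff E rt g i + 2 * n * ε / L ≤ payoff E w g i :=
      payoff_add_div_le_of_gap hle hL (iterate_add_eq_of_le hper ht) (hgw _ hne)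
    have hLn' : (L : ℝ) ≤ n := by exact_mod_cast (Nat.le_add_left L N).trans hLn
    have h2ε : 2 * ε ≤ 2 * n * ε / L := by
      rw [le_div_iff₀ (by exact_mod_cast hL)]
      nlinarith
    have hg := abs_le.1 (abs_payoff_sub_payoff_le hε hclose g i)
    have hf := abs_le.1 (abs_payoff_sub_payoff_le hε hclose f i)
    have hoptf := hopt i
    rw [payoff_congr_weights hfw] at hoptf
    linarith

section Policies

variable {n : ℕ} {E : Finset (Fin n × Fin n)} {VMax : Finset (Fin n)}
  {σ : {i : Fin n // i ∈ VMax} → Fin n} {τ : {i : Fin n // i ∉ VMax} → Fin n}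

theorem combine_mem (hσ : IsMaxPolicy E VMax σ) (hτ : IsMinPolicy E VMax τ) (z : Fin n) :
    (z, combine VMax σ τ z) ∈ E := by
  unfold combine
  split_ifs with h
  exacts [hσ ⟨z, h⟩, hτ ⟨z, h⟩]

theorem usedEdge_iff (e : {e : Fin n × Fin n // e ∈ E}) :
    UsedEdge VMax σ τ e ↔ combine VMax σ τ e.1.1 = e.1.2 := by
  unfold UsedEdge combine
  split_ifs <;> rfl

variable {w rt : {e : Fin n × Fin n // e ∈ E} → ℝ}

theorem wt_combine_of_usedEdge (h : ∀ e, UsedEdge VMax σ τ e → w e = rt e) (z : Fin n) :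
    wt E w (z, combine VMax σ τ z) = wt E rt (z, combine VMax σ τ z) := by
  unfold wt
  split_ifs
  exacts [h _ ((usedEdge_iff _).2 rfl), rfl]

theorem wt_eq_add_of_not_usedEdge {δ : ℝ} (h : ∀ e, ¬UsedEdge VMax σ τ e → w e = rt e + δ)
    {p : Fin n × Fin n} (hp : p ∈ E) (hne : combine VMax σ τ p.1 ≠ p.2) :
    wt E w p = wt E rt p + δ := by
  simp only [wt, dif_pos hp]
  exact h _ (mt (usedEdge_iff _).1 hne)

end Policies

theorem stmt19_general (n : ℕ) (E : Finset (Fin n × Fin n)) (VMax : Finset (Fin n))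
    (r rt : {e : Fin n × Fin n // e ∈ E} → ℝ) (ε : ℝ) (hε : 0 < ε)
    (hclose : ∀ e, |r e - rt e| ≤ ε)
    (σ : {i : Fin n // i ∈ VMax} → Fin n) (τ : {i : Fin n // i ∉ VMax} → Fin n)
    (hXi : InXi E VMax σ τ)
    (r1 r2 : {e : Fin n × Fin n // e ∈ E} → ℝ)
    (hused : ∀ e, UsedEdge VMax σ τ e → r1 e = rt e ∧ r2 e = rt e)
    (hunused : ∀ e, ¬ UsedEdge VMax σ τ e →
      r1 e = rt e - 2 * n * ε ∧ r2 e = rt e + 2 * n * ε)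
    (hopt1 : OptimalPair E VMax r1 σ τ) (hopt2 : OptimalPair E VMax r2 σ τ) :
    OptimalPair E VMax r σ τ := by
  obtain ⟨hσ, hτ, hcyc⟩ := hXi
  refine ⟨hσ, hτ, fun σ' τ' hσ' hτ' i => ⟨?_, ?_⟩⟩
  · exact payoff_le_payoff_of_perturbed hε.le hclose hcyc
      (wt_combine_of_usedEdge fun e he => (hused e he).2)
      (fun z hz => (wt_eq_add_of_not_usedEdge (fun e he => (hunused e he).2)
        (combine_mem hσ' hτ z) (Ne.symm hz)).ge)
      (fun j => (hopt2.2.2 σ' τ hσ' hτ j).1) i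
  · have hclose' : ∀ e, |(-r) e - (-rt) e| ≤ ε := fun e => by
      simpa only [Pi.neg_apply, neg_sub_neg, abs_sub_comm] using hclose e
    have hneg := payoff_le_payoff_of_perturbed (w := -r1) hε.le hclose' hcyc
      (wt_combine_of_usedEdge fun e he => by simp only [Pi.neg_apply, (hused e he).1])
      (fun z hz => (wt_eq_add_of_not_usedEdge
        (fun e he => by rw [Pi.neg_apply, Pi.neg_apply, (hunused e he).1]; ring)
        (combine_mem hσ hτ' z) (Ne.symm hz)).ge)
      (fun j => by simpa only [payoff_neg, neg_le_neg_iff] using (hopt1.2.2 σ τ' hσ hτ' j).2) i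
    simpa only [payoff_neg, neg_le_neg_iff] using hneg

/-- Optimality can be certified from perturbed weights: if
`‖r − r̃‖∞ ≤ ε` and `(σ,τ) ∈ Ξ` is optimal both for the weights `r⁽¹⁾` (equal to `r̃` on
the edges used by `(σ,τ)` and to `r̃ − 2nε` elsewhere) and for `r⁽²⁾` (equal to `r̃` on
used edges and `r̃ + 2nε` elsewhere), then `(σ,τ)` is optimal for the weights `r`. -/
theorem stmt19 (n : ℕ) (E : Finset (Fin n × Fin n)) (VMax : Finset (Fin n))
    (hout : ∀ i : Fin n, ∃ j : Fin n, (i, j) ∈ E)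
    (r rt : {e : Fin n × Fin n // e ∈ E} → ℝ) (ε : ℝ) (hε : 0 < ε)
    (hclose : ∀ e, |r e - rt e| ≤ ε)
    (σ : {i : Fin n // i ∈ VMax} → Fin n) (τ : {i : Fin n // i ∉ VMax} → Fin n)
    (hXi : InXi E VMax σ τ)
    (r1 r2 : {e : Fin n × Fin n // e ∈ E} → ℝ)
    (hused : ∀ e, UsedEdge VMax σ τ e → r1 e = rt e ∧ r2 e = rt e)
    (hunused : ∀ e, ¬ UsedEdge VMax σ τ e →
      r1 e = rt e - 2 * n * ε ∧ r2 e = rt e + 2 * n * ε)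
    (hopt1 : OptimalPair E VMax r1 σ τ) (hopt2 : OptimalPair E VMax r2 σ τ) :
    OptimalPair E VMax r σ τ :=
  stmt19_general n E VMax r rt ε hε hclose σ τ hXi r1 r2 hused hunused hopt1 hopt2
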